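/- arXiv:2210.13627 — 2 statements merged into one kernel-verified Lean document; each statement's English description precedes it below -/
import Mathlib

section
/- Let s>0, λ_L>0, y>0, and ξ_0,ξ_1∈ℕ_0. Set T_L = 1/λ_L, d(y,m)=y^m Γ(2s)/Γ(2s+m), and for 1≤k≤n, φ_s(k,n) = (1/k)·Γ(n+1)Γ(n-k+2s)/(Γ(n-k+1)Γ(n+2s)). Then T_L^{ξ_0} · ( ∫_0^{y}(dα/α)(1-α/y)^{2s-1}[d(y-α,ξ_1)-d(y,ξ_1)] + ∫_0^∞ (dα/α) e^{-λ_L α}[d(y+α,ξ_1)-d(y,ξ_1)] ) = Σ_{k=1}^{ξ_1} φ_s(k,ξ_1) [ T_L^{ξ_0+k} d(y,ξ_1-k) − T_L^{ξ_0} d(y,ξ_1) ]. -/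
/-! Expanding `(y + a)^n - y^n` binomially turns the integral against `e^{-λa} da / a` into a sum
of Gamma integrals `∫ a^{k-1} e^{-λa} da = Γ(k) T^k`, which produces the gain terms
`φ_s(k,n) T^k d(y,n-k)`. After the substitution `a = y t` the other integral is
`-d(y,n) ∫_0^1 (1 - (1-t)^n) (1-t)^{2s-1} dt / t`; writing `1 = (t + (1-t))^n` and expanding
again splits it into the Beta integrals `C(n,k) B(k, n-k+2s) = φ_s(k,n)`, so it equals
`-d(y,n)` times the total rate `Σ_k φ_s(k,n)`. -/

open MeasureTheory Real

noncomputable section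

namespace HeatModel

/-- Single-site duality function `d(y,m) = y^m Γ(2s)/Γ(2s+m)`. -/
def dFun (s : ℝ) (y : ℝ) (m : ℕ) : ℝ := y ^ m * Real.Gamma (2 * s) / Real.Gamma (2 * s + m)

/-- The jump rates `φ_s(k,n)` of the harmonic dual process. -/
def phi (s : ℝ) (k n : ℕ) : ℝ :=
  if 1 ≤ k ∧ k ≤ n then
    (1 / (k : ℝ)) * (Real.Gamma ((n : ℝ) + 1) * Real.Gamma ((n : ℝ) - (k : ℝ) + 2 * s)) /
      (Real.Gamma ((n : ℝ) - (k : ℝ) + 1) * Real.Gamma ((n : ℝ) + 2 * s))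
  else 0

theorem add_pow_sub_pow_eq_sum_Icc {R : Type*} [CommRing R] (x z : R) (n : ℕ) :
    (z + x) ^ n - z ^ n = ∑ k ∈ Finset.Icc 1 n, (n.choose k : R) * x ^ k * z ^ (n - k) := by
  rw [add_comm z x, add_pow, Finset.sum_range_succ', ← Finset.Ico_add_one_right_eq_Icc,
    Finset.sum_Ico_eq_sum_range]
  simp only [pow_zero, Nat.sub_zero, Nat.choose_zero_right, Nat.cast_one, one_mul, mul_one,
    add_sub_cancel_right]
  exact Finset.sum_congr rfl fun i _ => by rw [add_comm 1 i]; ring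

theorem integral_Ioo_rpow_mul_one_sub_rpow {u v : ℝ} (hu : 0 < u) (hv : 0 < v) :
    ∫ t in Set.Ioo (0 : ℝ) 1, t ^ (u - 1) * (1 - t) ^ (v - 1) = ProbabilityTheory.beta u v := by
  have hbeta : Complex.betaIntegral u v =
      ((∫ t in Set.Ioo (0 : ℝ) 1, t ^ (u - 1) * (1 - t) ^ (v - 1) : ℝ) : ℂ) := by
    rw [Complex.betaIntegral, intervalIntegral.integral_of_le zero_le_one,
      integral_Ioc_eq_integral_Ioo, ← integral_complex_ofReal]
    refine setIntegral_congr_fun measurableSet_Ioo fun t ht => ?_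
    push_cast
    rw [Complex.ofReal_cpow ht.1.le, Complex.ofReal_cpow (sub_nonneg.2 ht.2.le)]
    push_cast
    ring
  rw [ProbabilityTheory.beta_eq_betaIntegralReal u v hu hv, hbeta, Complex.ofReal_re]

theorem integrableOn_Ioo_rpow_mul_one_sub_rpow {u v : ℝ} (hu : 0 < u) (hv : 0 < v) :
    IntegrableOn (fun t : ℝ => t ^ (u - 1) * (1 - t) ^ (v - 1)) (Set.Ioo 0 1) :=
  Integrable.of_integral_ne_zero <| by
    rw [integral_Ioo_rpow_mul_one_sub_rpow hu hv]
    exact (ProbabilityTheory.beta_pos hu hv).ne'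

theorem integral_Ioi_pow_div_mul_exp_neg_mul {r : ℝ} (hr : 0 < r) {k : ℕ} (hk : k ≠ 0) :
    ∫ a in Set.Ioi (0 : ℝ), a ^ k / a * exp (-(r * a)) = (1 / r) ^ k * Gamma k := by
  rw [← rpow_natCast (1 / r), ← integral_rpow_mul_exp_neg_mul_Ioi (by positivity) hr]
  refine setIntegral_congr_fun measurableSet_Ioi fun a ha => ?_
  rw [rpow_sub_one (ne_of_gt ha), rpow_natCast]

theorem integrableOn_Ioi_pow_div_mul_exp_neg_mul {r : ℝ} (hr : 0 < r) {k : ℕ} (hk : k ≠ 0) :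
    IntegrableOn (fun a : ℝ => a ^ k / a * exp (-(r * a))) (Set.Ioi 0) :=
  Integrable.of_integral_ne_zero <| by
    rw [integral_Ioi_pow_div_mul_exp_neg_mul hr hk]
    have := Gamma_pos_of_pos (s := k) (by positivity)
    positivity

theorem phi_eq_choose_mul_beta (s : ℝ) {k n : ℕ} (hk : 1 ≤ k) (hkn : k ≤ n) :
    phi s k n = n.choose k * ProbabilityTheory.beta k ((n - k : ℕ) + 2 * s) := by
  have hk0 : (k : ℝ) ≠ 0 := by exact_mod_cast Nat.one_le_iff_ne_zero.1 hk
  have hfact : (n.choose k : ℝ) * (k * Gamma k) * Gamma ((n - k : ℕ) + 1) = Gamma (n + 1) := by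
    rw [← Gamma_add_one hk0, Gamma_nat_eq_factorial, Gamma_nat_eq_factorial,
      Gamma_nat_eq_factorial]
    exact_mod_cast Nat.choose_mul_factorial_mul_factorial hkn
  have hsum : (k : ℝ) + ((n - k : ℕ) + 2 * s) = n + 2 * s := by
    rw [Nat.cast_sub hkn]; ring
  have hG : Gamma ((n - k : ℕ) + 1) ≠ 0 := by positivity
  rw [phi, if_pos ⟨hk, hkn⟩, ProbabilityTheory.beta, hsum, ← Nat.cast_sub hkn, ← hfact]
  field_simp

theorem sum_phi_eq_integral {s : ℝ} (hs : 0 < s) (n : ℕ) :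
    ∑ k ∈ Finset.Icc 1 n, phi s k n =
      ∫ t in Set.Ioo (0 : ℝ) 1, (1 - (1 - t) ^ n) / t * (1 - t) ^ (2 * s - 1) := by
  have hbeta : ∀ k ∈ Finset.Icc 1 n, 0 < (k : ℝ) ∧ 0 < ((n - k : ℕ) : ℝ) + 2 * s :=
    fun k hk => ⟨by exact_mod_cast (Finset.mem_Icc.1 hk).1, by positivity⟩
  have hterm : ∀ k ∈ Finset.Icc 1 n, phi s k n = ∫ t in Set.Ioo (0 : ℝ) 1,
      n.choose k * (t ^ ((k : ℝ) - 1) * (1 - t) ^ (((n - k : ℕ) : ℝ) + 2 * s - 1)) := by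
    intro k hk
    obtain ⟨hk1, hkn⟩ := Finset.mem_Icc.1 hk
    rw [phi_eq_choose_mul_beta s hk1 hkn, integral_const_mul,
      integral_Ioo_rpow_mul_one_sub_rpow (hbeta k hk).1 (hbeta k hk).2]
  rw [Finset.sum_congr rfl hterm, ← integral_finsetSum _ fun k hk =>
    (integrableOn_Ioo_rpow_mul_one_sub_rpow (hbeta k hk).1 (hbeta k hk).2).const_mul _]
  refine setIntegral_congr_fun measurableSet_Ioo fun t ⟨ht0, ht1⟩ => ?_
  have h1t : 0 < 1 - t := by linarith
  rw [show 1 - (1 - t) ^ n = ((1 - t) + t) ^ n - (1 - t) ^ n by ring,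
    add_pow_sub_pow_eq_sum_Icc, Finset.sum_div, Finset.sum_mul]
  refine Finset.sum_congr rfl fun k _ => ?_
  rw [rpow_sub_one ht0.ne', rpow_natCast, add_sub_assoc, rpow_add h1t, rpow_natCast]
  ring

theorem setIntegral_Ioo_zero_eq_smul_comp_mul_left {E : Type*} [NormedAddCommGroup E]
    [NormedSpace ℝ E] {y : ℝ} (hy : 0 < y) (f : ℝ → E) :
    ∫ a in Set.Ioo 0 y, f a = y • ∫ t in Set.Ioo 0 1, f (y * t) := by
  rw [← integral_Ioc_eq_integral_Ioo, ← integral_Ioc_eq_integral_Ioo,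
    ← intervalIntegral.integral_of_le hy.le, ← intervalIntegral.integral_of_le zero_le_one,
    intervalIntegral.integral_comp_mul_left _ hy.ne', mul_zero, mul_one, smul_inv_smul₀ hy.ne']

theorem dFun_mul_left (s y x : ℝ) (n : ℕ) : dFun s (y * x) n = x ^ n * dFun s y n := by
  simp only [dFun, mul_pow]
  ring

theorem integral_Ioo_eq_neg_sum_phi_mul_dFun {s : ℝ} (hs : 0 < s) {y : ℝ} (hy : 0 < y)
    (n : ℕ) :
    ∫ a in Set.Ioo 0 y, (1 - a / y) ^ (2 * s - 1) / a * (dFun s (y - a) n - dFun s y n)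
      = -(∑ k ∈ Finset.Icc 1 n, phi s k n) * dFun s y n := by
  rw [sum_phi_eq_integral hs, setIntegral_Ioo_zero_eq_smul_comp_mul_left hy, smul_eq_mul,
    ← integral_const_mul, ← integral_neg, ← integral_mul_const]
  refine setIntegral_congr_fun measurableSet_Ioo fun t ⟨ht0, _⟩ => ?_
  rw [show y - y * t = y * (1 - t) by ring, dFun_mul_left, mul_div_cancel_left₀ _ hy.ne']
  field_simp
  ring

theorem phi_mul_dFun_sub {s : ℝ} (hs : 0 < s) (y : ℝ) {k n : ℕ} (hk : 1 ≤ k)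
    (hkn : k ≤ n) :
    phi s k n * dFun s y (n - k)
      = n.choose k * Gamma k * y ^ (n - k) * (Gamma (2 * s) / Gamma (2 * s + n)) := by
  have hsum : (k : ℝ) + ((n - k : ℕ) + 2 * s) = 2 * s + n := by
    rw [Nat.cast_sub hkn]; ring
  have hG : Gamma ((n - k : ℕ) + 2 * s) ≠ 0 := by positivity
  rw [phi_eq_choose_mul_beta s hk hkn, ProbabilityTheory.beta, dFun, hsum, add_comm _ (2 * s)]
  field_simp

theorem integral_Ioi_eq_sum_phi_mul_dFun {s : ℝ} (hs : 0 < s) {lamL : ℝ} (hL : 0 < lamL)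
    (y : ℝ) (n : ℕ) :
    ∫ a in Set.Ioi (0 : ℝ), exp (-(lamL * a)) / a * (dFun s (y + a) n - dFun s y n)
      = ∑ k ∈ Finset.Icc 1 n, phi s k n * ((1 / lamL) ^ k * dFun s y (n - k)) := by
  have hpoint : ∀ a ∈ Set.Ioi (0 : ℝ), exp (-(lamL * a)) / a * (dFun s (y + a) n - dFun s y n)
      = ∑ k ∈ Finset.Icc 1 n, n.choose k * y ^ (n - k) * (Gamma (2 * s) / Gamma (2 * s + n)) *
          (a ^ k / a * exp (-(lamL * a))) := by
    intro a _
    have hdiff : dFun s (y + a) n - dFun s y n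
        = ((y + a) ^ n - y ^ n) * (Gamma (2 * s) / Gamma (2 * s + n)) := by
      simp only [dFun]; ring
    rw [hdiff, add_pow_sub_pow_eq_sum_Icc, Finset.sum_mul, Finset.mul_sum]
    exact Finset.sum_congr rfl fun k _ => by ring
  have hk0 : ∀ k ∈ Finset.Icc 1 n, k ≠ 0 := fun k hk => by grind
  rw [setIntegral_congr_fun measurableSet_Ioi hpoint, integral_finsetSum _ fun k hk =>
    (integrableOn_Ioi_pow_div_mul_exp_neg_mul hL (hk0 k hk)).const_mul _]
  refine Finset.sum_congr rfl fun k hk => ?_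
  obtain ⟨hk1, hkn⟩ := Finset.mem_Icc.1 hk
  rw [integral_const_mul, integral_Ioi_pow_div_mul_exp_neg_mul hL (hk0 k hk),
    mul_left_comm (phi s k n),
    phi_mul_dFun_sub hs y hk1 hkn]
  ring

/-- Left boundary duality: the reservoir generator acting on the continuous variable of
the duality function `T_L^{ξ₀} d(y,ξ₁)` equals the absorbing dual generator which moves
`k` dual particles from site `1` to the absorbing site `0` at rate `φ_s(k,ξ₁)`. -/
theorem boundary_duality (s lamL : ℝ) (hs : 0 < s) (hL : 0 < lamL)
    (y : ℝ) (hy : 0 < y) (ξ₀ ξ₁ : ℕ) :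
    (1 / lamL) ^ ξ₀ *
        ((∫ a in Set.Ioo 0 y,
            (1 - a / y) ^ (2 * s - 1) / a * (dFun s (y - a) ξ₁ - dFun s y ξ₁))
          + ∫ a in Set.Ioi (0 : ℝ),
              Real.exp (-(lamL * a)) / a * (dFun s (y + a) ξ₁ - dFun s y ξ₁))
    = ∑ k ∈ Finset.Icc 1 ξ₁,
        phi s k ξ₁ *
          ((1 / lamL) ^ (ξ₀ + k) * dFun s y (ξ₁ - k) - (1 / lamL) ^ ξ₀ * dFun s y ξ₁) := by
  rw [integral_Ioo_eq_neg_sum_phi_mul_dFun hs hy, integral_Ioi_eq_sum_phi_mul_dFun hs hL,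
    ← Finset.sum_neg_distrib, Finset.sum_mul, ← Finset.sum_add_distrib, Finset.mul_sum]
  exact Finset.sum_congr rfl fun k _ => by ring

end HeatModel
end
end

section
/- Let s>0, y_1>0, y_2>0, and a,b∈ℕ_0. Then ∫_0^{y_1} α^{-1}(1-α/y_1)^{2s-1}[(y_1-α)^a (y_2+α)^b − y_1^a y_2^b] dα = Σ_{ℓ=1}^{b} binom(b,ℓ) y_1^{a+ℓ} y_2^{b-ℓ} B(ℓ, a+2s) + y_1^a y_2^b (ψ(2s) − ψ(a+2s)), where B(x,y)=Γ(x)Γ(y)/Γ(x+y) is the Beta function and ψ the digamma function. -/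
/-!
Substituting `α = y₁ u` turns the integral into one over `(0, 1)` with weight
`u⁻¹ (1 - u)^(2s-1)`. Expanding `(y₂ + y₁ u)^b` binomially, every term with `ℓ ≥ 1` absorbs the
factor `u⁻¹` and integrates to the Beta value `B(ℓ, a + 2s)`. What remains is
`y₁^a y₂^b ((1 - u)^a - 1) / u = -y₁^a y₂^b ∑_{k<a} (1 - u)^k`, whose terms integrate to
`1 / (2s + k)`; by the recurrence `ψ(x + 1) = ψ(x) + 1/x` these sum to `ψ(a + 2s) - ψ(2s)`.
-/

open MeasureTheory

noncomputable section

namespace HeatModel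

/-- The digamma function `ψ = Γ'/Γ`. -/
def digamma (x : ℝ) : ℝ := deriv Real.Gamma x / Real.Gamma x

/-- The Beta function `B(x,y) = Γ(x)Γ(y)/Γ(x+y)`. -/
def betaFun (x y : ℝ) : ℝ := Real.Gamma x * Real.Gamma y / Real.Gamma (x + y)

open Set

lemma ofReal_rpow_mul_one_sub_rpow {u : ℝ} (hu : u ∈ Icc (0 : ℝ) 1) (p q : ℝ) :
    ((u ^ (p - 1) * (1 - u) ^ (q - 1) : ℝ) : ℂ) =
      (u : ℂ) ^ ((p : ℂ) - 1) * (1 - (u : ℂ)) ^ ((q : ℂ) - 1) := by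
  push_cast [Complex.ofReal_cpow hu.1, Complex.ofReal_cpow (sub_nonneg.2 hu.2)]
  rfl

lemma betaIntegral_ofReal {p q : ℝ} :
    Complex.betaIntegral p q =
      ((∫ u in Ioo (0 : ℝ) 1, u ^ (p - 1) * (1 - u) ^ (q - 1) : ℝ) : ℂ) := by
  rw [Complex.betaIntegral, intervalIntegral.integral_of_le zero_le_one,
    integral_Ioc_eq_integral_Ioo, ← integral_complex_ofReal]
  refine setIntegral_congr_fun measurableSet_Ioo fun u hu => ?_
  exact (ofReal_rpow_mul_one_sub_rpow (Ioo_subset_Icc_self hu) p q).symm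

lemma integrableOn_rpow_mul_one_sub_rpow {p q : ℝ} (hp : 0 < p) (hq : 0 < q) :
    IntegrableOn (fun u : ℝ => u ^ (p - 1) * (1 - u) ^ (q - 1)) (Ioo 0 1) := by
  have hC := (Complex.betaIntegral_convergent (u := p) (v := q) (by simpa) (by simpa)).1
  have := (hC.mono_set Ioo_subset_Ioc_self).congr_fun
    (fun u hu => (ofReal_rpow_mul_one_sub_rpow (Ioo_subset_Icc_self hu) p q).symm) measurableSet_Ioo
  exact (by simpa using this.re : Integrable _ _)

lemma integral_rpow_mul_one_sub_rpow {p q : ℝ} (hp : 0 < p) (hq : 0 < q) :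
    ∫ u in Ioo (0 : ℝ) 1, u ^ (p - 1) * (1 - u) ^ (q - 1) = betaFun p q := by
  have h := Complex.Gamma_mul_Gamma_eq_betaIntegral (s := p) (t := q) (by simpa) (by simpa)
  rw [betaIntegral_ofReal, ← Complex.ofReal_add] at h
  simp only [Complex.Gamma_ofReal] at h
  norm_cast at h
  rw [betaFun, h, mul_div_cancel_left₀ _ (Real.Gamma_pos_of_pos (add_pos hp hq)).ne']

lemma betaFun_one_left {q : ℝ} (hq : 0 < q) : betaFun 1 q = q⁻¹ := by
  rw [betaFun, Real.Gamma_one, add_comm, Real.Gamma_add_one hq.ne', one_mul,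
    div_mul_cancel_right₀ (Real.Gamma_pos_of_pos hq).ne']

lemma integral_one_sub_rpow {q : ℝ} (hq : 0 < q) :
    ∫ u in Ioo (0 : ℝ) 1, (1 - u) ^ (q - 1) = q⁻¹ := by
  simpa [betaFun_one_left hq] using integral_rpow_mul_one_sub_rpow one_pos hq

lemma integrableOn_one_sub_rpow {q : ℝ} (hq : 0 < q) :
    IntegrableOn (fun u : ℝ => (1 - u) ^ (q - 1)) (Ioo 0 1) := by
  simpa using integrableOn_rpow_mul_one_sub_rpow one_pos hq

lemma digamma_add_one {x : ℝ} (hx : ∀ m : ℕ, x ≠ -m) : digamma (x + 1) = digamma x + x⁻¹ := by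
  have hx0 : x ≠ 0 := by simpa using hx 0
  have hΓ : deriv (fun t => Real.Gamma (t + 1)) x = Real.Gamma x + x * deriv Real.Gamma x := by
    have heq : (fun t => Real.Gamma (t + 1)) =ᶠ[nhds x] fun t => t * Real.Gamma t := by
      filter_upwards [isOpen_ne.mem_nhds hx0] with t ht using Real.Gamma_add_one ht
    rw [heq.deriv_eq, deriv_fun_mul differentiableAt_fun_id (Real.differentiableAt_Gamma hx)]
    simp
  rw [digamma, digamma, ← deriv_comp_add_const, hΓ, Real.Gamma_add_one hx0]
  field_simp [Real.Gamma_ne_zero hx]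
  ring

lemma digamma_add_nat {x : ℝ} (hx : ∀ m : ℕ, x ≠ -m) (n : ℕ) :
    digamma (x + n) = digamma x + ∑ k ∈ Finset.range n, (x + k)⁻¹ := by
  induction n with
  | zero => simp
  | succ n ih =>
    have hxn : ∀ m : ℕ, x + n ≠ -m := fun m h => hx (m + n) (by push_cast; linarith)
    rw [Nat.cast_succ, ← add_assoc, digamma_add_one hxn, ih, Finset.sum_range_succ, add_assoc]

lemma setIntegral_Ioo_zero_eq_smul_comp_mul_left_s14 {E : Type*} [NormedAddCommGroup E]
    [NormedSpace ℝ E] (f : ℝ → E) {c : ℝ} (hc : 0 < c) :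
    ∫ x in Ioo 0 c, f x = c • ∫ u in Ioo 0 1, f (c * u) := by
  rw [← integral_Ioc_eq_integral_Ioo, ← integral_Ioc_eq_integral_Ioo,
    ← intervalIntegral.integral_of_le hc.le, ← intervalIntegral.integral_of_le zero_le_one,
    intervalIntegral.integral_comp_mul_left f hc.ne', mul_zero, mul_one, smul_inv_smul₀ hc.ne']

lemma add_pow_eq_pow_add_sum_Icc {R : Type*} [CommSemiring R] (x y : R) (n : ℕ) :
    (x + y) ^ n = y ^ n + ∑ l ∈ Finset.Icc 1 n, x ^ l * y ^ (n - l) * n.choose l := by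
  rw [add_pow, Finset.range_eq_Ico, Finset.sum_eq_sum_Ico_succ_bot (by omega : 0 < n + 1),
    Finset.Ico_add_one_right_eq_Icc]
  simp

lemma bulk_integrand_comp_mul_left {s y₁ y₂ u : ℝ} (a b : ℕ) (h₁ : y₁ ≠ 0)
    (hu : u ∈ Ioo (0 : ℝ) 1) :
    y₁ * ((y₁ * u)⁻¹ * (1 - y₁ * u / y₁) ^ (2 * s - 1) *
        ((y₁ - y₁ * u) ^ a * (y₂ + y₁ * u) ^ b - y₁ ^ a * y₂ ^ b)) =
      ∑ l ∈ Finset.Icc 1 b, (b.choose l : ℝ) * y₁ ^ (a + l) * y₂ ^ (b - l) *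
          (u ^ ((l : ℝ) - 1) * (1 - u) ^ ((a + 2 * s) - 1)) -
        ∑ k ∈ Finset.range a, y₁ ^ a * y₂ ^ b * (1 - u) ^ ((2 * s + k) - 1) := by
  obtain ⟨hu₀, hu₁⟩ := hu
  have hv : 0 < 1 - u := by linarith
  have rpow_shift (n : ℕ) : (1 - u) ^ ((n + 2 * s) - 1) = (1 - u) ^ (2 * s - 1) * (1 - u) ^ n := by
    rw [← Real.rpow_natCast, ← Real.rpow_add hv]; ring_nf
  have hbinom := add_pow_eq_pow_add_sum_Icc (y₁ * u) y₂ b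
  have hgeom : (1 - u) ^ a - 1 = -u * ∑ k ∈ Finset.range a, (1 - u) ^ k := by
    rw [← geom_sum_mul]; ring
  have hfirst : ∑ l ∈ Finset.Icc 1 b, (b.choose l : ℝ) * y₁ ^ (a + l) * y₂ ^ (b - l) *
      (u ^ ((l : ℝ) - 1) * (1 - u) ^ ((a + 2 * s) - 1)) =
      u⁻¹ * (1 - u) ^ (2 * s - 1) * y₁ ^ a * (1 - u) ^ a *
        ∑ l ∈ Finset.Icc 1 b, (y₁ * u) ^ l * y₂ ^ (b - l) * b.choose l := by
    rw [Finset.mul_sum]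
    refine Finset.sum_congr rfl fun l _ => ?_
    rw [Real.rpow_sub_one hu₀.ne', Real.rpow_natCast, rpow_shift]
    field_simp
    ring
  have hsecond : ∑ k ∈ Finset.range a, y₁ ^ a * y₂ ^ b * (1 - u) ^ ((2 * s + k) - 1) =
      (1 - u) ^ (2 * s - 1) * y₁ ^ a * y₂ ^ b * ∑ k ∈ Finset.range a, (1 - u) ^ k := by
    rw [Finset.mul_sum]
    refine Finset.sum_congr rfl fun k _ => ?_
    rw [add_comm (2 * s), rpow_shift]
    ring
  rw [hfirst, hsecond, show 1 - y₁ * u / y₁ = 1 - u by field_simp,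
    show (y₁ - y₁ * u) ^ a = y₁ ^ a * (1 - u) ^ a by rw [← mul_pow]; ring, add_comm y₂, hbinom]
  field_simp
  linear_combination y₂ ^ b * hgeom

lemma integral_bulk_integrand_rescaled {s : ℝ} (hs : 0 < s) (y₁ y₂ : ℝ) (a b : ℕ) :
    ∫ u in Ioo (0 : ℝ) 1,
        (∑ l ∈ Finset.Icc 1 b, (b.choose l : ℝ) * y₁ ^ (a + l) * y₂ ^ (b - l) *
            (u ^ ((l : ℝ) - 1) * (1 - u) ^ ((a + 2 * s) - 1)) -
          ∑ k ∈ Finset.range a, y₁ ^ a * y₂ ^ b * (1 - u) ^ ((2 * s + k) - 1)) =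
      ∑ l ∈ Finset.Icc 1 b, (b.choose l : ℝ) * y₁ ^ (a + l) * y₂ ^ (b - l) * betaFun l (a + 2 * s) -
        y₁ ^ a * y₂ ^ b * ∑ k ∈ Finset.range a, (2 * s + k)⁻¹ := by
  have hq : 0 < (a : ℝ) + 2 * s := by positivity
  have hpos : ∀ l ∈ Finset.Icc 1 b, 0 < (l : ℝ) := fun l hl =>
    Nat.cast_pos.2 (Finset.mem_Icc.1 hl).1
  have hr (k : ℕ) : 0 < 2 * s + k := by positivity
  have hint₁ : ∀ l ∈ Finset.Icc 1 b, IntegrableOn (fun u : ℝ => (b.choose l : ℝ) * y₁ ^ (a + l) *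
      y₂ ^ (b - l) * (u ^ ((l : ℝ) - 1) * (1 - u) ^ ((a + 2 * s) - 1))) (Ioo 0 1) :=
    fun l hl => (integrableOn_rpow_mul_one_sub_rpow (hpos l hl) hq).const_mul _
  have hint₂ : ∀ k ∈ Finset.range a, IntegrableOn
      (fun u : ℝ => y₁ ^ a * y₂ ^ b * (1 - u) ^ ((2 * s + k) - 1)) (Ioo 0 1) :=
    fun k _ => (integrableOn_one_sub_rpow (hr k)).const_mul _
  rw [integral_sub (integrable_finsetSum _ hint₁) (integrable_finsetSum _ hint₂),
    integral_finsetSum _ hint₁, integral_finsetSum _ hint₂, Finset.mul_sum]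
  congr 1 <;> refine Finset.sum_congr rfl fun i hi => ?_ <;> rw [integral_const_mul]
  · rw [integral_rpow_mul_one_sub_rpow (hpos i hi) hq]
  · rw [integral_one_sub_rpow (hr i)]

theorem bulk_on_monomials_general (s : ℝ) (hs : 0 < s) (y₁ y₂ : ℝ) (h₁ : 0 < y₁)
    (a b : ℕ) :
    (∫ α in Set.Ioo 0 y₁,
        α⁻¹ * (1 - α / y₁) ^ (2 * s - 1) * ((y₁ - α) ^ a * (y₂ + α) ^ b - y₁ ^ a * y₂ ^ b))
    = (∑ l ∈ Finset.Icc 1 b,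
        (Nat.choose b l : ℝ) * y₁ ^ (a + l) * y₂ ^ (b - l) * betaFun l ((a : ℝ) + 2 * s))
      + y₁ ^ a * y₂ ^ b * (digamma (2 * s) - digamma ((a : ℝ) + 2 * s)) := by
  have h2s : ∀ m : ℕ, 2 * s ≠ -m := fun m h => by linarith [(m.cast_nonneg : (0 : ℝ) ≤ m)]
  rw [setIntegral_Ioo_zero_eq_smul_comp_mul_left_s14 _ h₁, smul_eq_mul, ← integral_const_mul,
    setIntegral_congr_fun measurableSet_Ioo fun u hu => bulk_integrand_comp_mul_left a b h₁.ne' hu,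
    integral_bulk_integrand_rescaled hs, add_comm (a : ℝ), digamma_add_nat h2s]
  ring

/-- The action of the rightward Levy bulk generator on a product of monomials. -/
theorem bulk_on_monomials (s : ℝ) (hs : 0 < s) (y₁ y₂ : ℝ) (h₁ : 0 < y₁) (h₂ : 0 < y₂)
    (a b : ℕ) :
    (∫ α in Set.Ioo 0 y₁,
        α⁻¹ * (1 - α / y₁) ^ (2 * s - 1) * ((y₁ - α) ^ a * (y₂ + α) ^ b - y₁ ^ a * y₂ ^ b))
    = (∑ l ∈ Finset.Icc 1 b,
        (Nat.choose b l : ℝ) * y₁ ^ (a + l) * y₂ ^ (b - l) * betaFun l ((a : ℝ) + 2 * s))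
      + y₁ ^ a * y₂ ^ b * (digamma (2 * s) - digamma ((a : ℝ) + 2 * s)) :=
  bulk_on_monomials_general s hs y₁ y₂ h₁ a b

end HeatModel
end
end
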